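/- arXiv:1601.01563 — 2 statements merged into one kernel-verified Lean document; each statement's English description precedes it below -/
import Mathlib

section
/- Let p ≥ 2 and let a, b be vectors in a real inner product space (in particular ℝⁿ). Then (4/p²) · ‖ |b|^{(p−2)/2} b − |a|^{(p−2)/2} a ‖² ≤ ⟨ |b|^{p−2} b − |a|^{p−2} a , b − a ⟩, where |·| = ‖·‖ denotes the norm and ⟨·,·⟩ the inner product. -/
/-!
Write `A = ‖a‖` and `B = ‖b‖`. With the norms fixed, both sides are affine in `⟪a, b⟫`, and the
right side minus the left side decreases in `⟪a, b⟫` because `4 / p² ≤ 1`. By Cauchy–Schwarz it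
therefore suffices to treat `⟪a, b⟫ = A * B`, which is the scalar inequality
`(4 / p²) (B^{p/2} - A^{p/2})² ≤ (B - A) (B^{p-1} - A^{p-1})`. For `q = p / 2` and `A ≤ B`, the
tangent line of the convex function `x ↦ x ^ q` at `B` gives `B^q - A^q ≤ q B^{q-1} (B - A)`, and
`B^{q-1} (B^q - A^q) ≤ B^{2q-1} - A^{2q-1}`; multiplying, `(B^q - A^q)² ≤ q (B - A) (B^{2q-1} -
A^{2q-1})`, and `q ≥ 1` turns `1 / q` into `1 / q²`.
-/

open RealInnerProductSpace

namespace Real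

theorem rpow_sub_rpow_le_mul_rpow_sub_one_mul {q A B : ℝ} (hq : 1 ≤ q) (hA : 0 ≤ A)
    (hAB : A ≤ B) : B ^ q - A ^ q ≤ q * B ^ (q - 1) * (B - A) := by
  rcases hAB.eq_or_lt with rfl | hlt
  · simp
  have hslope := (convexOn_rpow hq).slope_le_of_hasDerivAt (x := A) (y := B) hA
    (hA.trans hlt.le) hlt (hasDerivAt_rpow_const (Or.inr hq))
  rwa [slope_def_field, div_le_iff₀ (sub_pos.2 hlt)] at hslope

theorem sq_rpow_sub_rpow_le {q A B : ℝ} (hq : 1 ≤ q) (hA : 0 ≤ A) (hB : 0 ≤ B) :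
    (B ^ q - A ^ q) ^ 2 ≤ q * ((B - A) * (B ^ (2 * q - 1) - A ^ (2 * q - 1))) := by
  wlog hAB : A ≤ B generalizing A B
  · calc (B ^ q - A ^ q) ^ 2 = (A ^ q - B ^ q) ^ 2 := by ring
      _ ≤ q * ((A - B) * (A ^ (2 * q - 1) - B ^ (2 * q - 1))) := this hB hA (le_of_not_ge hAB)
      _ = q * ((B - A) * (B ^ (2 * q - 1) - A ^ (2 * q - 1))) := by ring
  have hsplit : ∀ x : ℝ, 0 ≤ x → x ^ (2 * q - 1) = x ^ (q - 1) * x ^ q := fun x hx => by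
    rw [← rpow_add' hx (by linarith)]
    ring_nf
  have htangent := rpow_sub_rpow_le_mul_rpow_sub_one_mul hq hA hAB
  have hdiff : 0 ≤ B ^ q - A ^ q := sub_nonneg.2 (rpow_le_rpow hA hAB (by linarith))
  have hfactor : B ^ (q - 1) * (B ^ q - A ^ q) ≤ B ^ (2 * q - 1) - A ^ (2 * q - 1) := by
    have := mul_le_mul_of_nonneg_right (rpow_le_rpow hA hAB (by linarith : 0 ≤ q - 1))
      (rpow_nonneg hA q)
    rw [hsplit A hA, hsplit B hB]
    linarith
  calc (B ^ q - A ^ q) ^ 2 = (B ^ q - A ^ q) * (B ^ q - A ^ q) := sq _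
    _ ≤ q * B ^ (q - 1) * (B - A) * (B ^ q - A ^ q) := mul_le_mul_of_nonneg_right htangent hdiff
    _ = q * (B - A) * (B ^ (q - 1) * (B ^ q - A ^ q)) := by ring
    _ ≤ q * (B - A) * (B ^ (2 * q - 1) - A ^ (2 * q - 1)) := by gcongr
    _ = q * ((B - A) * (B ^ (2 * q - 1) - A ^ (2 * q - 1))) := by ring

theorem four_div_sq_mul_sq_rpow_sub_rpow_le {p A B : ℝ} (hp : 2 ≤ p) (hA : 0 ≤ A) (hB : 0 ≤ B) :
    4 / p ^ 2 * (B ^ (p / 2) - A ^ (p / 2)) ^ 2 ≤ (B - A) * (B ^ (p - 1) - A ^ (p - 1)) := by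
  have h := sq_rpow_sub_rpow_le (q := p / 2) (by linarith) hA hB
  rw [show 2 * (p / 2) - 1 = p - 1 by ring] at h
  have hY : 0 ≤ (B - A) * (B ^ (p - 1) - A ^ (p - 1)) :=
    nonneg_of_mul_nonneg_right ((sq_nonneg _).trans h) (by linarith)
  calc 4 / p ^ 2 * (B ^ (p / 2) - A ^ (p / 2)) ^ 2
      ≤ 4 / p ^ 2 * (p / 2 * ((B - A) * (B ^ (p - 1) - A ^ (p - 1)))) := by gcongr
    _ = 2 / p * ((B - A) * (B ^ (p - 1) - A ^ (p - 1))) := by field_simp; ring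
    _ ≤ (B - A) * (B ^ (p - 1) - A ^ (p - 1)) :=
        mul_le_of_le_one_left hY ((div_le_one (by linarith)).2 hp)

end Real

theorem sub_mul_sub_sub_mul_sq_le_inner_sub_sub_mul_norm_sq {V : Type*} [NormedAddCommGroup V]
    [InnerProductSpace ℝ V] {k : ℝ} (hk : |k| ≤ 1) (u v : ℝ) (a b : V) :
    (‖b‖ - ‖a‖) * (v ^ 2 * ‖b‖ - u ^ 2 * ‖a‖) - k * (v * ‖b‖ - u * ‖a‖) ^ 2 ≤
      ⟪v ^ 2 • b - u ^ 2 • a, b - a⟫ - k * ‖v • b - u • a‖ ^ 2 := by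
  have hnorm : ‖v • b - u • a‖ ^ 2 = v ^ 2 * ‖b‖ ^ 2 - 2 * (u * v) * ⟪a, b⟫ + u ^ 2 * ‖a‖ ^ 2 := by
    rw [norm_sub_sq_real, norm_smul, norm_smul, real_inner_smul_left, real_inner_smul_right,
      real_inner_comm b a, Real.norm_eq_abs, Real.norm_eq_abs, mul_pow, mul_pow, sq_abs, sq_abs]
    ring
  have hinner : ⟪v ^ 2 • b - u ^ 2 • a, b - a⟫ =
      v ^ 2 * ‖b‖ ^ 2 - (u ^ 2 + v ^ 2) * ⟪a, b⟫ + u ^ 2 * ‖a‖ ^ 2 := by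
    simp only [inner_sub_left, inner_sub_right, real_inner_smul_left, real_inner_self_eq_norm_sq,
      real_inner_comm b a]
    ring
  have hcoef : 0 ≤ u ^ 2 + v ^ 2 - 2 * k * (u * v) := by
    have hk2 : k ^ 2 ≤ 1 := (sq_le_one_iff_abs_le_one k).2 hk
    nlinarith [sq_nonneg (u - k * v), mul_nonneg (sub_nonneg.2 hk2) (sq_nonneg v)]
  -- the gap between the two sides is `(u² + v² - 2 k u v) (‖a‖ ‖b‖ - ⟪a, b⟫)`
  have hgap := mul_nonneg hcoef (sub_nonneg.2 (real_inner_le_norm a b))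
  rw [hnorm, hinner]
  nlinarith [hgap]

/-- The Bojarski–Iwaniec vector inequality (7): for `p ≥ 2`
and vectors `a, b` in a real inner product space,
`(4/p²)·‖|b|^{(p-2)/2}b − |a|^{(p-2)/2}a‖² ≤ ⟨|b|^{p-2}b − |a|^{p-2}a, b − a⟩`. -/
theorem bojarski_iwaniec_ineq_one {V : Type*} [NormedAddCommGroup V]
    [InnerProductSpace ℝ V] (p : ℝ) (hp : 2 ≤ p) (a b : V) :
    (4 / p ^ 2) * ‖(‖b‖ ^ ((p - 2) / 2)) • b - (‖a‖ ^ ((p - 2) / 2)) • a‖ ^ 2 ≤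
      ⟪(‖b‖ ^ (p - 2)) • b - (‖a‖ ^ (p - 2)) • a, b - a⟫ := by
  have hsq : ∀ x : ℝ, 0 ≤ x → x ^ (p - 2) = (x ^ ((p - 2) / 2)) ^ 2 := fun x hx => by
    rw [← Real.rpow_mul_natCast hx]
    ring_nf
  have hmul : ∀ x : ℝ, 0 ≤ x → x ^ ((p - 2) / 2) * x = x ^ (p / 2) := fun x hx => by
    rw [← Real.rpow_add_one' hx (by linarith)]
    ring_nf
  have hsq_mul : ∀ x : ℝ, 0 ≤ x → (x ^ ((p - 2) / 2)) ^ 2 * x = x ^ (p - 1) := fun x hx => by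
    rw [← hsq x hx, ← Real.rpow_add_one' hx (by linarith)]
    ring_nf
  have hscalar := Real.four_div_sq_mul_sq_rpow_sub_rpow_le hp (norm_nonneg a) (norm_nonneg b)
  rw [← hmul _ (norm_nonneg a), ← hmul _ (norm_nonneg b), ← hsq_mul _ (norm_nonneg a),
    ← hsq_mul _ (norm_nonneg b)] at hscalar
  have hk : |4 / p ^ 2| ≤ 1 := by
    rw [abs_of_nonneg (by positivity), div_le_one (by positivity)]
    nlinarith
  rw [hsq _ (norm_nonneg a), hsq _ (norm_nonneg b)]
  linarith [sub_mul_sub_sub_mul_sq_le_inner_sub_sub_mul_norm_sq hk (‖a‖ ^ ((p - 2) / 2))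
    (‖b‖ ^ ((p - 2) / 2)) a b]
end

section
/- Let p ≥ 2 and let a, b be vectors in a real inner product space (in particular ℝⁿ). Then ‖ |b|^{p−2} b − |a|^{p−2} a ‖ ≤ (p−1) · ( |b|^{(p−2)/2} + |a|^{(p−2)/2} ) · ‖ |b|^{(p−2)/2} b − |a|^{(p−2)/2} a ‖, where |·| = ‖·‖ denotes the norm. -/
/-! Put `α = ‖a‖^s`, `β = ‖b‖^s` with `s = (p-2)/2`, `u = β b`, `v = α a`, and assume `‖a‖ ≤ ‖b‖`.
The identity `2(β u - α v) = (β + α)(u - v) + (β - α)(u + v)` reduces the claim (even with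
constant `1` in place of `p - 1`) to `(β - α)(‖u‖ + ‖v‖) ≤ (β + α)(‖u‖ - ‖v‖)`, i.e. to
`β ‖v‖ ≤ α ‖u‖`, which reads `αβ‖a‖ ≤ αβ‖b‖`. -/

section

variable {E : Type*} [NormedAddCommGroup E] [NormedSpace ℝ E]

lemma norm_smul_sub_smul_le_of_mul_norm_le {α β : ℝ} (hα : 0 ≤ α) (hαβ : α ≤ β) {u v : E}
    (h : β * ‖v‖ ≤ α * ‖u‖) : ‖β • u - α • v‖ ≤ (β + α) * ‖u - v‖ := by
  have hsplit : β • u - α • v = (2 : ℝ)⁻¹ • ((β + α) • (u - v) + (β - α) • (u + v)) := by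
    module
  have htri : ‖(β + α) • (u - v) + (β - α) • (u + v)‖ ≤
      (β + α) * ‖u - v‖ + (β - α) * (‖u‖ + ‖v‖) := by
    refine (norm_add_le _ _).trans (add_le_add ?_ ?_)
    · rw [norm_smul, Real.norm_of_nonneg (by linarith)]
    · rw [norm_smul, Real.norm_of_nonneg (by linarith)]
      exact mul_le_mul_of_nonneg_left (norm_add_le u v) (by linarith)
  have hrev : ‖u‖ - ‖v‖ ≤ ‖u - v‖ := norm_sub_norm_le u v
  have hrev' : (β + α) * (‖u‖ - ‖v‖) ≤ (β + α) * ‖u - v‖ :=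
    mul_le_mul_of_nonneg_left hrev (by linarith)
  rw [hsplit, norm_smul, norm_inv, Real.norm_two]
  linarith

lemma norm_rpow_smul_sub_rpow_smul_le_of_norm_le {s : ℝ} (hs : 0 ≤ s) {a b : E}
    (hab : ‖a‖ ≤ ‖b‖) :
    ‖(‖b‖ ^ s) • (‖b‖ ^ s • b) - (‖a‖ ^ s) • (‖a‖ ^ s • a)‖ ≤
      (‖b‖ ^ s + ‖a‖ ^ s) * ‖‖b‖ ^ s • b - ‖a‖ ^ s • a‖ := by
  refine norm_smul_sub_smul_le_of_mul_norm_le (by positivity)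
    (Real.rpow_le_rpow (norm_nonneg a) hab hs) ?_
  rw [norm_smul, norm_smul, Real.norm_of_nonneg (by positivity),
    Real.norm_of_nonneg (by positivity), mul_left_comm]
  exact mul_le_mul_of_nonneg_left (mul_le_mul_of_nonneg_left hab (by positivity))
    (by positivity)

lemma norm_rpow_smul_sub_rpow_smul_le {s : ℝ} (hs : 0 ≤ s) (a b : E) :
    ‖(‖b‖ ^ s) • (‖b‖ ^ s • b) - (‖a‖ ^ s) • (‖a‖ ^ s • a)‖ ≤
      (‖b‖ ^ s + ‖a‖ ^ s) * ‖‖b‖ ^ s • b - ‖a‖ ^ s • a‖ := by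
  rcases le_total ‖a‖ ‖b‖ with hab | hba
  · exact norm_rpow_smul_sub_rpow_smul_le_of_norm_le hs hab
  · simpa only [norm_sub_rev, add_comm] using norm_rpow_smul_sub_rpow_smul_le_of_norm_le hs hba

end

/-- The Bojarski–Iwaniec vector inequality (8): for `p ≥ 2`
and vectors `a, b` in a real inner product space,
`‖|b|^{p-2}b − |a|^{p-2}a‖ ≤ (p−1)(|b|^{(p-2)/2} + |a|^{(p-2)/2})·‖|b|^{(p-2)/2}b − |a|^{(p-2)/2}a‖`. -/
theorem bojarski_iwaniec_ineq_two {V : Type*} [NormedAddCommGroup V]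
    [InnerProductSpace ℝ V] (p : ℝ) (hp : 2 ≤ p) (a b : V) :
    ‖(‖b‖ ^ (p - 2)) • b - (‖a‖ ^ (p - 2)) • a‖ ≤
      (p - 1) * (‖b‖ ^ ((p - 2) / 2) + ‖a‖ ^ ((p - 2) / 2)) *
        ‖(‖b‖ ^ ((p - 2) / 2)) • b - (‖a‖ ^ ((p - 2) / 2)) • a‖ := by
  set s := (p - 2) / 2 with hs_def
  have hs : 0 ≤ s := by rw [hs_def]; linarith
  have hsplit (x : V) : ‖x‖ ^ (p - 2) • x = ‖x‖ ^ s • ‖x‖ ^ s • x := by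
    rw [smul_smul, ← Real.rpow_add_of_nonneg (norm_nonneg x) hs hs, add_halves]
  rw [hsplit, hsplit, mul_assoc]
  refine (norm_rpow_smul_sub_rpow_smul_le hs a b).trans (le_mul_of_one_le_left ?_ (by linarith))
  positivity
end
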